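/- arXiv:1505.03447 — 4 statements merged into one kernel-verified Lean document; each statement's English description precedes it below -/
import Mathlib

section
/- For m, n, a, b real with n > -1, m+n+1 > 0, a ≥ 0 and b ≥ 0, the normalized Nuttall Q-function 𝒬_{m,n}(a,b) = a^{-n} ∫_b^∞ x^m e^{-(x²+a²)/2} I_n(ax) dx satisfies the upper bound 𝒬_{m,n}(a,b) ≤ Γ((m+n+1)/2) · ₁F₁((m+n+1)/2; n+1; a²/2) / (Γ(n+1) · 2^{(n-m+1)/2} · e^{a²/2}). -/
/-! Expanding `I_n` in its power series writes `a^{-n} x^m e^{-(x²+a²)/2} I_n(ax)` as a series of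
nonnegative multiples of the Gaussian moments `x^{m+n+2l} e^{-x²/2}`, whose integrals over `(0, ∞)`
are `2^{(m+n+2l-1)/2} Γ((m+n+1)/2 + l)`. By monotone convergence the integral over `(0, ∞)` is the
sum of these, which is exactly the `Γ · ₁F₁` bound; over `(b, ∞)` the nonnegative integrand can only
give less. -/

open MeasureTheory Real Filter

noncomputable def uGamma (a x : ℝ) : ℝ := ∫ t in Set.Ioi x, t ^ (a - 1) * Real.exp (-t)

noncomputable def lGamma (a x : ℝ) : ℝ := ∫ t in Set.Ioc 0 x, t ^ (a - 1) * Real.exp (-t)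

noncomputable def poch (x : ℝ) (l : ℕ) : ℝ := ∏ i ∈ Finset.range l, (x + i)

noncomputable def besselI (n x : ℝ) : ℝ :=
  ∑' l : ℕ, (x / 2) ^ (n + 2 * (l : ℝ)) / ((l.factorial : ℝ) * Real.Gamma (n + (l : ℝ) + 1))

noncomputable def oneF₁ (α β x : ℝ) : ℝ :=
  ∑' i : ℕ, (poch α i / poch β i) * x ^ i / (i.factorial : ℝ)

noncomputable def nuttallQ (m n a b : ℝ) : ℝ :=
  ∫ x in Set.Ioi b, x ^ m * Real.exp (-(x ^ 2 + a ^ 2) / 2) * besselI n (a * x)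

noncomputable def nQ (m n a b : ℝ) : ℝ := a ^ (-n) * nuttallQ m n a b

noncomputable def marcumQ (ν a b : ℝ) : ℝ :=
  a ^ (1 - ν) * ∫ x in Set.Ioi b, x ^ ν * Real.exp (-(x ^ 2 + a ^ 2) / 2) * besselI (ν - 1) (a * x)

noncomputable def toronto (B m n r : ℝ) : ℝ :=
  2 * r ^ (n - m + 1) * Real.exp (-r ^ 2) *
    ∫ t in Set.Ioo 0 B, t ^ (m - n) * Real.exp (-t ^ 2) * besselI n (2 * r * t)

open Finset in
lemma poch_nonneg {x : ℝ} (hx : 0 ≤ x) (l : ℕ) : 0 ≤ poch x l :=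
  prod_nonneg fun i _ => by positivity

open Finset in
lemma poch_pos {x : ℝ} (hx : 0 < x) (l : ℕ) : 0 < poch x l :=
  prod_pos fun i _ => by positivity

lemma poch_succ (x : ℝ) (l : ℕ) : poch x (l + 1) = poch x l * (x + l) :=
  Finset.prod_range_succ _ _

lemma poch_one (l : ℕ) : poch 1 l = l.factorial := by
  rw [poch, ← Finset.prod_range_add_one_eq_factorial]
  push_cast
  simp only [add_comm]

lemma Gamma_add_natCast_eq_mul_poch {x : ℝ} (hx : 0 < x) (l : ℕ) :
    Gamma (x + l) = Gamma x * poch x l := by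
  induction l with
  | zero => simp [poch]
  | succ l ih =>
    rw [Nat.cast_succ, ← add_assoc, Gamma_add_one (by positivity), ih, poch_succ]
    ring

lemma poch_le_pow_mul_poch {c d K : ℝ} (hc : 0 ≤ c) (hd : 0 ≤ d) (hK : 1 ≤ K)
    (hcd : c ≤ K * d) (l : ℕ) : poch c l ≤ K ^ l * poch d l := by
  induction l with
  | zero => simp [poch]
  | succ l ih =>
    have hstep : c + l ≤ K * (d + l) := by nlinarith [(Nat.cast_nonneg l : (0 : ℝ) ≤ l)]
    calc poch c (l + 1) = poch c l * (c + l) := poch_succ c l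
      _ ≤ K ^ l * poch d l * (K * (d + l)) :=
        mul_le_mul ih hstep (by positivity) (by have := poch_nonneg hd l; positivity)
      _ = K ^ (l + 1) * poch d (l + 1) := by rw [poch_succ]; ring

lemma summable_oneF₁_series {α β : ℝ} (hα : 0 ≤ α) (hβ : 0 < β) (x : ℝ) :
    Summable fun i : ℕ => poch α i / poch β i * x ^ i / i.factorial := by
  set K := max 1 (α / β)
  have hαK : α ≤ K * β := (div_le_iff₀ hβ).1 (le_max_right _ _)
  refine (Real.summable_pow_div_factorial (K * |x|)).of_norm_bounded fun i => ?_
  have hpβ := poch_pos hβ i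
  have hratio : poch α i / poch β i ≤ K ^ i :=
    (div_le_iff₀ hpβ).2 (poch_le_pow_mul_poch hα hβ.le (le_max_left _ _) hαK i)
  rw [Real.norm_eq_abs, abs_div, abs_mul, abs_div, abs_of_nonneg (poch_nonneg hα i),
    abs_of_pos hpβ, abs_pow, Nat.abs_cast, mul_pow]
  gcongr

lemma oneF₁_nonneg {α β x : ℝ} (hα : 0 ≤ α) (hβ : 0 < β) (hx : 0 ≤ x) : 0 ≤ oneF₁ α β x :=
  tsum_nonneg fun i => by have := poch_nonneg hα i; have := poch_pos hβ i; positivity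

lemma hasSum_Gamma_div_Gamma_mul_oneF₁ {α β : ℝ} (hα : 0 < α) (hβ : 0 < β) (x : ℝ) :
    HasSum (fun i : ℕ => Gamma (α + i) / Gamma (β + i) * x ^ i / i.factorial)
      (Gamma α / Gamma β * oneF₁ α β x) := by
  refine ((summable_oneF₁_series hα.le hβ x).hasSum.mul_left (Gamma α / Gamma β)).congr_fun
    fun i => ?_
  have := poch_pos hβ i
  have := Gamma_pos_of_pos hβ
  rw [Gamma_add_natCast_eq_mul_poch hα, Gamma_add_natCast_eq_mul_poch hβ]
  field_simp

lemma summable_besselI_series {n : ℝ} (hn : -1 < n) (q : ℝ) :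
    Summable fun l : ℕ => q ^ l / (l.factorial * Gamma (n + l + 1)) := by
  have hn1 : 0 < n + 1 := by linarith
  -- the `l`-th term is that of `₁F₁(1; n + 1; |q|)` divided by `l! Γ(n + 1)`, in absolute value
  refine ((summable_oneF₁_series zero_le_one hn1 |q|).div_const (Gamma (n + 1))).of_norm_bounded
    fun l => ?_
  have hfac : (1 : ℝ) ≤ l.factorial := by exact_mod_cast l.factorial_pos
  have hp := poch_pos hn1 l
  have hden : 0 < l.factorial * (Gamma (n + 1) * poch (n + 1) l) := by positivity
  rw [show n + l + 1 = n + 1 + l by ring, Gamma_add_natCast_eq_mul_poch hn1, poch_one,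
    Real.norm_eq_abs, abs_div, abs_pow, abs_of_pos hden]
  calc |q| ^ l / (l.factorial * (Gamma (n + 1) * poch (n + 1) l))
      = |q| ^ l / poch (n + 1) l / Gamma (n + 1) / l.factorial := by field_simp
    _ ≤ |q| ^ l / poch (n + 1) l / Gamma (n + 1) := div_le_self (by positivity) hfac
    _ = l.factorial / poch (n + 1) l * |q| ^ l / l.factorial / Gamma (n + 1) := by field_simp

lemma integrableOn_rpow_mul_exp_neg_sq_div_two {s : ℝ} (hs : -1 < s) :
    IntegrableOn (fun x : ℝ => x ^ s * exp (-x ^ 2 / 2)) (Set.Ioi 0) := by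
  convert integrableOn_rpow_mul_exp_neg_mul_sq (one_half_pos (α := ℝ)) hs using 4
  ring

lemma integral_rpow_mul_exp_neg_sq_div_two {s : ℝ} (hs : -1 < s) :
    ∫ x in Set.Ioi (0 : ℝ), x ^ s * exp (-x ^ 2 / 2) = 2 ^ ((s - 1) / 2) * Gamma ((s + 1) / 2) := by
  have h := integral_rpow_mul_exp_neg_mul_rpow two_pos hs (one_half_pos (α := ℝ))
  simp_rw [rpow_two] at h
  rw [show (fun x : ℝ => x ^ s * exp (-x ^ 2 / 2)) = fun x => x ^ s * exp (-(1 / 2) * x ^ 2) by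
    ext x; ring_nf, h, one_div, inv_rpow zero_le_two, ← rpow_neg zero_le_two, ← rpow_neg_one 2,
    ← rpow_add two_pos]
  ring_nf

-- `0 < a ∨ n = 0` excludes exactly the junk value `0 ^ (-n) = 0` of the real power.
lemma rpow_neg_mul_besselI_term {n a x : ℝ} (ha : 0 < a ∨ n = 0) (hx : 0 < x) (l : ℕ) :
    a ^ (-n) * (a * x / 2) ^ (n + 2 * (l : ℝ)) = (x / 2) ^ n * ((a * x / 2) ^ 2) ^ l := by
  rw [show 2 * (l : ℝ) = ((2 * l : ℕ) : ℝ) by push_cast; ring, ← pow_mul]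
  rcases ha with ha | rfl
  · rw [rpow_add (by positivity), rpow_natCast, ← mul_assoc, mul_div_assoc,
      mul_rpow ha.le (by positivity), ← mul_assoc, rpow_neg ha.le, inv_mul_cancel₀ (by positivity),
      one_mul]
  · rw [neg_zero, rpow_zero, zero_add, rpow_natCast, rpow_zero, one_mul]

lemma hasSum_rpow_neg_mul_besselI {n a x : ℝ} (hn : -1 < n) (ha : 0 < a ∨ n = 0) (hx : 0 < x) :
    HasSum (fun l : ℕ => (x / 2) ^ n * ((a * x / 2) ^ 2) ^ l / (l.factorial * Gamma (n + l + 1)))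
      (a ^ (-n) * besselI n (a * x)) := by
  have hval : a ^ (-n) * besselI n (a * x)
      = ∑' l : ℕ, (x / 2) ^ n * (((a * x / 2) ^ 2) ^ l / (l.factorial * Gamma (n + l + 1))) := by
    rw [besselI, ← tsum_mul_left]
    congr 1 with l
    rw [← mul_div_assoc, rpow_neg_mul_besselI_term ha hx, mul_div_assoc]
  rw [hval]
  exact ((summable_besselI_series hn _).mul_left _).hasSum.congr_fun fun l => mul_div_assoc _ _ _

noncomputable def nuttallBound (m n a : ℝ) : ℝ :=
  Gamma ((m + n + 1) / 2) * oneF₁ ((m + n + 1) / 2) (n + 1) (a ^ 2 / 2) /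
    (Gamma (n + 1) * 2 ^ ((n - m + 1) / 2) * exp (a ^ 2 / 2))

lemma nuttallBound_nonneg {m n : ℝ} (hn : -1 < n) (hmn : 0 < m + n + 1) (a : ℝ) :
    0 ≤ nuttallBound m n a := by
  have hn1 : 0 < n + 1 := by linarith
  have := oneF₁_nonneg (x := a ^ 2 / 2) (by linarith : 0 ≤ (m + n + 1) / 2) hn1 (by positivity)
  unfold nuttallBound
  positivity

lemma hasSum_nuttall_integrand {m n a x : ℝ} (hn : -1 < n) (ha : 0 < a ∨ n = 0) (hx : 0 < x) :
    HasSum (fun l : ℕ => exp (-a ^ 2 / 2) * 2 ^ (-n) * ((a / 2) ^ 2) ^ l /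
        (l.factorial * Gamma (n + l + 1)) * (x ^ (m + n + 2 * (l : ℝ)) * exp (-x ^ 2 / 2)))
      (a ^ (-n) * (x ^ m * exp (-(x ^ 2 + a ^ 2) / 2) * besselI n (a * x))) := by
  rw [mul_left_comm]
  refine ((hasSum_rpow_neg_mul_besselI hn ha hx).mul_left _).congr_fun fun l => ?_
  have hx2 : x ^ (m + n + 2 * (l : ℝ)) = x ^ m * x ^ n * (x ^ 2) ^ l := by
    rw [rpow_add hx, rpow_add hx, show 2 * (l : ℝ) = ((2 * l : ℕ) : ℝ) by push_cast; ring,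
      rpow_natCast, pow_mul]
  have hexp : exp (-(x ^ 2 + a ^ 2) / 2) = exp (-a ^ 2 / 2) * exp (-x ^ 2 / 2) := by
    rw [← exp_add]; ring_nf
  have := Gamma_pos_of_pos (by linarith [(Nat.cast_nonneg l : (0 : ℝ) ≤ l)] : 0 < n + l + 1)
  rw [hx2, hexp, div_rpow hx.le zero_le_two, rpow_neg zero_le_two]
  field_simp
  ring

lemma hasSum_integral_nuttall_terms {m n : ℝ} (hn : -1 < n) (hmn : 0 < m + n + 1) (a : ℝ) :
    HasSum (fun l : ℕ => ∫ x in Set.Ioi (0 : ℝ), exp (-a ^ 2 / 2) * 2 ^ (-n) * ((a / 2) ^ 2) ^ l /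
        (l.factorial * Gamma (n + l + 1)) * (x ^ (m + n + 2 * (l : ℝ)) * exp (-x ^ 2 / 2)))
      (nuttallBound m n a) := by
  have hc : 0 < (m + n + 1) / 2 := by linarith
  have hn1 : 0 < n + 1 := by linarith
  have hsum := (hasSum_Gamma_div_Gamma_mul_oneF₁ hc hn1 (a ^ 2 / 2)).mul_left
    (exp (-a ^ 2 / 2) * 2 ^ ((m - n - 1) / 2))
  have hbound : exp (-a ^ 2 / 2) * 2 ^ ((m - n - 1) / 2) *
      (Gamma ((m + n + 1) / 2) / Gamma (n + 1) * oneF₁ ((m + n + 1) / 2) (n + 1) (a ^ 2 / 2))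
      = nuttallBound m n a := by
    rw [nuttallBound, neg_div, exp_neg, show (m - n - 1) / 2 = -((n - m + 1) / 2) by ring,
      rpow_neg zero_le_two]
    field_simp
  rw [← hbound]
  refine hsum.congr_fun fun l => ?_
  have hl : (-1 : ℝ) < m + n + 2 * l := by linarith [(Nat.cast_nonneg l : (0 : ℝ) ≤ l)]
  have hpow : (2 : ℝ) ^ (-n) * 2 ^ ((m + n + 2 * l - 1) / 2) = 2 ^ ((m - n - 1) / 2) * 2 ^ l := by
    rw [← rpow_add two_pos, ← rpow_natCast, ← rpow_add two_pos]
    ring_nf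
  have := Gamma_pos_of_pos (by linarith : 0 < n + 1 + l)
  rw [integral_const_mul, integral_rpow_mul_exp_neg_sq_div_two hl,
    show (m + n + 2 * l + 1) / 2 = (m + n + 1) / 2 + l by ring,
    show n + l + 1 = n + 1 + l by ring]
  have hquarter : (a ^ 2 / 2 ^ 2) ^ l * 2 ^ l = (a ^ 2 / 2) ^ l := by
    rw [← mul_pow]; ring_nf
  field_simp
  linear_combination (a ^ 2 / 2 ^ 2) ^ l * hpow + 2 ^ ((m - n - 1) / 2) * hquarter

lemma lintegral_enorm_nuttall_integrand {m n a : ℝ} (hn : -1 < n) (hmn : 0 < m + n + 1)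
    (ha : 0 < a ∨ n = 0) :
    ∫⁻ x in Set.Ioi 0, ‖a ^ (-n) * (x ^ m * exp (-(x ^ 2 + a ^ 2) / 2) * besselI n (a * x))‖ₑ
      = ENNReal.ofReal (nuttallBound m n a) := by
  set g : ℕ → ℝ → ℝ := fun l x => exp (-a ^ 2 / 2) * 2 ^ (-n) * ((a / 2) ^ 2) ^ l /
    (l.factorial * Gamma (n + l + 1)) * (x ^ (m + n + 2 * (l : ℝ)) * exp (-x ^ 2 / 2))
  have hg_nonneg (l : ℕ) (x : ℝ) (hx : x ∈ Set.Ioi 0) : 0 ≤ g l x := by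
    have := Gamma_pos_of_pos (by linarith [(Nat.cast_nonneg l : (0 : ℝ) ≤ l)] : 0 < n + l + 1)
    have := rpow_nonneg (le_of_lt hx) (m + n + 2 * l)
    positivity
  have hterms := hasSum_integral_nuttall_terms hn hmn a
  calc ∫⁻ x in Set.Ioi 0, ‖a ^ (-n) * (x ^ m * exp (-(x ^ 2 + a ^ 2) / 2) * besselI n (a * x))‖ₑ
      = ∫⁻ x in Set.Ioi 0, ∑' l, ENNReal.ofReal (g l x) := by
        refine setLIntegral_congr_fun measurableSet_Ioi fun x hx => ?_
        have h := hasSum_nuttall_integrand (m := m) hn ha hx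
        rw [enorm_eq_ofReal (h.nonneg (hg_nonneg · x hx)), ← h.tsum_eq,
          ENNReal.ofReal_tsum_of_nonneg (hg_nonneg · x hx) h.summable]
    _ = ∑' l, ∫⁻ x in Set.Ioi 0, ENNReal.ofReal (g l x) :=
        lintegral_tsum fun l => (by fun_prop : Measurable (g l)).ennreal_ofReal.aemeasurable
    _ = ∑' l, ENNReal.ofReal (∫ x in Set.Ioi 0, g l x) := by
        refine tsum_congr fun l => (ofReal_integral_eq_lintegral_ofReal ?_ ?_).symm
        · have hl : (-1 : ℝ) < m + n + 2 * l := by linarith [(Nat.cast_nonneg l : (0 : ℝ) ≤ l)]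
          exact (integrableOn_rpow_mul_exp_neg_sq_div_two hl).const_mul _
        · exact (ae_restrict_mem measurableSet_Ioi).mono (hg_nonneg l)
    _ = ENNReal.ofReal (nuttallBound m n a) := by
        rw [← ENNReal.ofReal_tsum_of_nonneg (fun l => setIntegral_nonneg measurableSet_Ioi
          (hg_nonneg l)) hterms.summable, hterms.tsum_eq]

lemma nQ_le_nuttallBound {m n a b : ℝ} (hn : -1 < n) (hmn : 0 < m + n + 1) (ha : 0 < a ∨ n = 0)
    (hb : 0 ≤ b) : nQ m n a b ≤ nuttallBound m n a := by
  have key : ‖∫ x in Set.Ioi b,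
      a ^ (-n) * (x ^ m * exp (-(x ^ 2 + a ^ 2) / 2) * besselI n (a * x))‖ₑ
      ≤ ENNReal.ofReal (nuttallBound m n a) :=
    calc _ ≤ _ := enorm_integral_le_lintegral_enorm _
      _ ≤ _ := lintegral_mono_set (Set.Ioi_subset_Ioi hb)
      _ = _ := lintegral_enorm_nuttall_integrand hn hmn ha
  rw [enorm_eq_ofReal_abs, ENNReal.ofReal_le_ofReal_iff (nuttallBound_nonneg hn hmn a)] at key
  rw [nQ, nuttallQ, ← integral_const_mul]
  exact (le_abs_self _).trans key

theorem stmt4 (m n a b : ℝ) (hn : -1 < n) (hmn : 0 < m + n + 1) (ha : 0 ≤ a) (hb : 0 ≤ b) :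
    nQ m n a b ≤
      Real.Gamma ((m + n + 1) / 2) * oneF₁ ((m + n + 1) / 2) (n + 1) (a ^ 2 / 2) /
        (Real.Gamma (n + 1) * (2 : ℝ) ^ ((n - m + 1) / 2) * Real.exp (a ^ 2 / 2)) := by
  rcases ha.lt_or_eq with ha | rfl
  · exact nQ_le_nuttallBound hn hmn (Or.inl ha) hb
  by_cases hn0 : n = 0
  · exact nQ_le_nuttallBound hn hmn (Or.inr hn0) hb
  rw [nQ, zero_rpow (neg_ne_zero.2 hn0), zero_mul]
  exact nuttallBound_nonneg hn hmn 0
end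

section
/- For m, n, a, b real with n > -1, m+n+1 > 0, a > 0, b ≥ 0, the normalized Nuttall Q-function admits the exact series representation 𝒬_{m,n}(a,b) = ∑_{l=0}^∞ a^{2l} e^{-a²/2} Γ((m+n+2l+1)/2, b²/2) / (l! · Γ(n+l+1) · 2^{(n-m+2l+1)/2}), where Γ(·,·) is the upper incomplete gamma function. -/
open MeasureTheory Real Filter

/-!
Expand `I_n(ax)` into its power series. The `l`-th term of the integrand is a multiple of
`x ^ (m + n + 2l) * exp (-x ^ 2 / 2)`, whose integral over `(b, ∞)` becomes an upper incomplete
gamma value after the substitution `t = x ^ 2 / 2`. All terms are nonnegative, and bounding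
`Γ(s, b²/2) ≤ Γ(s)` leaves a series that converges by the ratio test, so the series may be
integrated term by term.
-/

open Set

lemma image_sq_div_two_Ioi {b : ℝ} (hb : 0 ≤ b) :
    (fun x : ℝ => x ^ 2 / 2) '' Ioi b = Ioi (b ^ 2 / 2) := by
  ext t
  simp only [mem_image, mem_Ioi]
  constructor
  · rintro ⟨x, hx, rfl⟩
    nlinarith
  · intro ht
    refine ⟨√(2 * t), (lt_sqrt hb).2 (by linarith), ?_⟩
    rw [sq_sqrt (by nlinarith)]
    ring

lemma injOn_sq_div_two_Ioi {b : ℝ} (hb : 0 ≤ b) :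
    InjOn (fun x : ℝ => x ^ 2 / 2) (Ioi b) := by
  intro x hx y hy hxy
  simp only [mem_Ioi] at hx hy hxy
  nlinarith

lemma hasDerivWithinAt_sq_div_two (s : Set ℝ) (x : ℝ) :
    HasDerivWithinAt (fun x : ℝ => x ^ 2 / 2) x s x := by
  simpa using ((hasDerivAt_pow 2 x).div_const 2).hasDerivWithinAt

lemma integrableOn_Ioi_mul_comp_sq_div_two_iff {b : ℝ} (hb : 0 ≤ b) (g : ℝ → ℝ) :
    IntegrableOn (fun x => x * g (x ^ 2 / 2)) (Ioi b) ↔ IntegrableOn g (Ioi (b ^ 2 / 2)) := by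
  rw [← image_sq_div_two_Ioi hb, integrableOn_image_iff_integrableOn_abs_deriv_smul
    measurableSet_Ioi (fun x _ => hasDerivWithinAt_sq_div_two _ x) (injOn_sq_div_two_Ioi hb)]
  refine integrableOn_congr_fun (fun x hx => ?_) measurableSet_Ioi
  rw [smul_eq_mul, abs_of_pos (hb.trans_lt hx)]

lemma integral_Ioi_mul_comp_sq_div_two {b : ℝ} (hb : 0 ≤ b) (g : ℝ → ℝ) :
    ∫ x in Ioi b, x * g (x ^ 2 / 2) = ∫ t in Ioi (b ^ 2 / 2), g t := by
  rw [← image_sq_div_two_Ioi hb, integral_image_eq_integral_abs_deriv_smul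
    measurableSet_Ioi (fun x _ => hasDerivWithinAt_sq_div_two _ x) (injOn_sq_div_two_Ioi hb)]
  refine setIntegral_congr_fun measurableSet_Ioi (fun x hx => ?_)
  rw [smul_eq_mul, abs_of_pos (hb.trans_lt hx)]

lemma integrableOn_Ioi_rpow_mul_exp_neg {a : ℝ} (ha : 0 < a) {x : ℝ} (hx : 0 ≤ x) :
    IntegrableOn (fun t => t ^ (a - 1) * exp (-t)) (Ioi x) :=
  ((GammaIntegral_convergent ha).mono_set (Ioi_subset_Ioi hx)).congr_fun
    (fun _ _ => mul_comm _ _) measurableSet_Ioi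

lemma uGamma_nonneg (a : ℝ) {x : ℝ} (hx : 0 ≤ x) : 0 ≤ uGamma a x :=
  setIntegral_nonneg measurableSet_Ioi fun t ht => by
    have : 0 < t := hx.trans_lt ht
    positivity

lemma uGamma_le_Gamma {a x : ℝ} (ha : 0 < a) (hx : 0 ≤ x) : uGamma a x ≤ Gamma a := by
  rw [Gamma_eq_integral ha, uGamma]
  refine (setIntegral_mono_set (integrableOn_Ioi_rpow_mul_exp_neg ha le_rfl) ?_
    (Ioi_subset_Ioi hx).eventuallyLE).trans_eq
      (setIntegral_congr_fun measurableSet_Ioi fun _ _ => mul_comm _ _)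
  filter_upwards [ae_restrict_mem measurableSet_Ioi] with t (ht : 0 < t)
  positivity

/-- Substituting `t = x ^ 2 / 2` turns the integrand into the one of `uGamma`. -/
lemma rpow_mul_exp_neg_sq_div_two_eq {s x : ℝ} (hx : 0 < x) :
    x ^ s * exp (-x ^ 2 / 2) =
      2 ^ ((s - 1) / 2) * (x * ((x ^ 2 / 2) ^ ((s + 1) / 2 - 1) * exp (-(x ^ 2 / 2)))) := by
  have hexp : ((2 : ℕ) : ℝ) * ((s - 1) / 2) = s - 1 := by push_cast; ring
  rw [div_rpow (by positivity) zero_le_two, ← rpow_natCast x 2, ← rpow_mul hx.le,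
    show (s + 1) / 2 - 1 = (s - 1) / 2 by ring, hexp, neg_div, rpow_sub_one hx.ne']
  field_simp

lemma integrableOn_Ioi_rpow_mul_exp_neg_sq_div_two {s b : ℝ} (hs : -1 < s) (hb : 0 ≤ b) :
    IntegrableOn (fun x => x ^ s * exp (-x ^ 2 / 2)) (Ioi b) := by
  have h : IntegrableOn (fun x => x * ((x ^ 2 / 2) ^ ((s + 1) / 2 - 1) * exp (-(x ^ 2 / 2))))
      (Ioi b) := (integrableOn_Ioi_mul_comp_sq_div_two_iff hb _).2
    (integrableOn_Ioi_rpow_mul_exp_neg (by linarith) (by positivity))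
  exact IntegrableOn.congr_fun (h.const_mul (2 ^ ((s - 1) / 2)))
    (fun x hx => (rpow_mul_exp_neg_sq_div_two_eq (hb.trans_lt hx)).symm) measurableSet_Ioi

lemma integral_Ioi_rpow_mul_exp_neg_sq_div_two (s : ℝ) {b : ℝ} (hb : 0 ≤ b) :
    ∫ x in Ioi b, x ^ s * exp (-x ^ 2 / 2) =
      2 ^ ((s - 1) / 2) * uGamma ((s + 1) / 2) (b ^ 2 / 2) := by
  rw [setIntegral_congr_fun measurableSet_Ioi
      (fun x hx => rpow_mul_exp_neg_sq_div_two_eq (s := s) (hb.trans_lt hx)), integral_const_mul,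
    integral_Ioi_mul_comp_sq_div_two hb fun t => t ^ ((s + 1) / 2 - 1) * exp (-t), uGamma]

open Nat in
lemma summable_pow_mul_Gamma_add_div_factorial_mul_Gamma_add (q : ℝ) {c d : ℝ} (hc : 0 < c)
    (hd : 0 < d) : Summable fun l : ℕ => q ^ l * Gamma (c + l) / (l ! * Gamma (d + l)) := by
  set T := fun l : ℕ => q ^ l * Gamma (c + l) / (l ! * Gamma (d + l))
  have hstep (l : ℕ) : T (l + 1) = q * (c + l) / ((l + 1) * (d + l)) * T l := by
    have : Gamma (d + l) ≠ 0 := (Gamma_pos_of_pos (by positivity)).ne'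
    simp only [T, factorial_succ, cast_mul, cast_succ, ← add_assoc, pow_succ,
      Gamma_add_one (by positivity : c + l ≠ 0), Gamma_add_one (by positivity : d + l ≠ 0)]
    field_simp
  have hratio : Tendsto (fun l : ℕ => q * (c + l) / ((l + 1) * (d + l))) atTop (nhds 0) := by
    have h := (tendsto_const_nhds (x := q)).mul
      ((tendsto_add_mul_div_add_mul_atTop_nhds c d 1 one_ne_zero).mul
        tendsto_one_div_add_atTop_nhds_zero_nat)
    simp only [one_mul, div_one, mul_zero] at h
    refine h.congr fun l => ?_
    field_simp
  refine summable_of_ratio_norm_eventually_le (r := 1 / 2) (by norm_num) ?_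
  filter_upwards [hratio.norm.eventually (ge_mem_nhds (by norm_num : ‖(0 : ℝ)‖ < 1 / 2))]
    with l hl
  rw [hstep, norm_mul]
  exact mul_le_mul_of_nonneg_right hl (norm_nonneg _)

open Nat in
noncomputable def nuttallTerm (m n a : ℝ) (l : ℕ) (x : ℝ) : ℝ :=
  x ^ m * exp (-(x ^ 2 + a ^ 2) / 2) *
    ((a * x / 2) ^ (n + 2 * (l : ℝ)) / (l ! * Gamma (n + l + 1)))

lemma tsum_nuttallTerm (m n a x : ℝ) :
    ∑' l, nuttallTerm m n a l x = x ^ m * exp (-(x ^ 2 + a ^ 2) / 2) * besselI n (a * x) := by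
  rw [besselI, ← tsum_mul_left]
  rfl

open Nat in
noncomputable def nQTerm (m n a b : ℝ) (l : ℕ) : ℝ :=
  a ^ (2 * l) * exp (-a ^ 2 / 2) * uGamma ((m + n + 2 * (l : ℝ) + 1) / 2) (b ^ 2 / 2) /
    (l ! * Gamma (n + l + 1) * 2 ^ ((n - m + 2 * (l : ℝ) + 1) / 2))

section NuttallSeries

variable {m n a b : ℝ}

open Nat in
lemma nuttallTerm_eq (l : ℕ) (ha : 0 ≤ a) {x : ℝ} (hx : 0 < x) :
    nuttallTerm m n a l x = (a / 2) ^ (n + 2 * (l : ℝ)) * exp (-a ^ 2 / 2) /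
      (l ! * Gamma (n + l + 1)) * (x ^ (m + n + 2 * (l : ℝ)) * exp (-x ^ 2 / 2)) := by
  rw [nuttallTerm, mul_div_right_comm a, mul_rpow (by positivity) hx.le, add_assoc m,
    rpow_add hx m, show -(x ^ 2 + a ^ 2) / 2 = -x ^ 2 / 2 + -a ^ 2 / 2 by ring, exp_add]
  ring

lemma nuttallTerm_nonneg (l : ℕ) (hn : -1 < n) (ha : 0 ≤ a) {x : ℝ} (hx : 0 ≤ x) :
    0 ≤ nuttallTerm m n a l x := by
  have : 0 < Gamma (n + l + 1) := Gamma_pos_of_pos (by linarith [l.cast_nonneg (α := ℝ)])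
  exact mul_nonneg (by positivity) (div_nonneg (by positivity) (by positivity))

lemma integrableOn_nuttallTerm (l : ℕ) (hmn : 0 < m + n + 1) (ha : 0 ≤ a) (hb : 0 ≤ b) :
    IntegrableOn (nuttallTerm m n a l) (Ioi b) := by
  have hs : -1 < m + n + 2 * (l : ℝ) := by linarith [l.cast_nonneg (α := ℝ)]
  exact IntegrableOn.congr_fun ((integrableOn_Ioi_rpow_mul_exp_neg_sq_div_two hs hb).const_mul _)
    (fun _ hx => (nuttallTerm_eq l ha (hb.trans_lt hx)).symm) measurableSet_Ioi

lemma integral_nuttallTerm (l : ℕ) (ha : 0 < a) (hb : 0 ≤ b) :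
    ∫ x in Ioi b, nuttallTerm m n a l x = a ^ n * nQTerm m n a b l := by
  rw [setIntegral_congr_fun measurableSet_Ioi
      (fun _ hx => nuttallTerm_eq l ha.le (hb.trans_lt hx)), integral_const_mul,
    integral_Ioi_rpow_mul_exp_neg_sq_div_two _ hb, nQTerm]
  have hpow_a : (a / 2) ^ (n + 2 * (l : ℝ)) = a ^ n * a ^ (2 * l) / 2 ^ (n + 2 * (l : ℝ)) := by
    rw [div_rpow ha.le zero_le_two, rpow_add ha, ← Nat.cast_ofNat, ← Nat.cast_mul, rpow_natCast]
  have hpow_two : (2 : ℝ) ^ ((m + n + 2 * (l : ℝ) - 1) / 2) =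
      2 ^ (n + 2 * (l : ℝ)) / 2 ^ ((n - m + 2 * (l : ℝ) + 1) / 2) := by
    rw [← rpow_sub two_pos]
    ring_nf
  rw [hpow_a, hpow_two]
  field_simp

open Nat in
lemma nQTerm_eq (l : ℕ) : nQTerm m n a b l = exp (-a ^ 2 / 2) / 2 ^ ((n - m + 1) / 2) *
    ((a ^ 2 / 2) ^ l * uGamma ((m + n + 1) / 2 + l) (b ^ 2 / 2) / (l ! * Gamma (n + 1 + l))) := by
  rw [nQTerm, add_right_comm n, show (m + n + 2 * (l : ℝ) + 1) / 2 = (m + n + 1) / 2 + l by ring,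
    show (n - m + 2 * (l : ℝ) + 1) / 2 = (n - m + 1) / 2 + l by ring, rpow_add two_pos,
    rpow_natCast, div_pow, ← pow_mul]
  ring

lemma summable_nQTerm (hn : -1 < n) (hmn : 0 < m + n + 1) :
    Summable (nQTerm m n a b) := by
  have hΓ (l : ℕ) : 0 < Gamma (n + 1 + l) :=
    Gamma_pos_of_pos (by linarith [l.cast_nonneg (α := ℝ)])
  refine .of_nonneg_of_le (fun l => ?_) (fun l => ?_)
    ((summable_pow_mul_Gamma_add_div_factorial_mul_Gamma_add (a ^ 2 / 2)
      (by linarith : 0 < (m + n + 1) / 2)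
      (by linarith : 0 < n + 1)).mul_left (exp (-a ^ 2 / 2) / 2 ^ ((n - m + 1) / 2)))
  · have := uGamma_nonneg ((m + n + 1) / 2 + l) (by positivity : 0 ≤ b ^ 2 / 2)
    have := hΓ l
    rw [nQTerm_eq]
    positivity
  · have := hΓ l
    rw [nQTerm_eq]
    gcongr
    exact uGamma_le_Gamma (by linarith [l.cast_nonneg (α := ℝ)]) (by positivity)

end NuttallSeries

theorem stmt6 (m n a b : ℝ) (hn : -1 < n) (hmn : 0 < m + n + 1) (ha : 0 < a) (hb : 0 ≤ b) :
    HasSum (fun l : ℕ =>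
        a ^ (2 * l) * Real.exp (-a ^ 2 / 2) *
          uGamma ((m + n + 2 * (l : ℝ) + 1) / 2) (b ^ 2 / 2) /
          ((l.factorial : ℝ) * Real.Gamma (n + (l : ℝ) + 1) *
            (2 : ℝ) ^ ((n - m + 2 * (l : ℝ) + 1) / 2)))
      (nQ m n a b) := by
  have hnorm (l : ℕ) :
      ∫ x in Ioi b, ‖nuttallTerm m n a l x‖ = a ^ n * nQTerm m n a b l := by
    rw [← integral_nuttallTerm l ha hb]
    exact setIntegral_congr_fun measurableSet_Ioi fun x hx =>
      norm_of_nonneg (nuttallTerm_nonneg l hn ha.le (hb.trans_lt hx).le)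
  have hsum := hasSum_integral_of_summable_integral_norm
    (fun l => integrableOn_nuttallTerm l hmn ha.le hb)
    (by simpa only [hnorm] using (summable_nQTerm hn hmn).mul_left (a ^ n))
  simp only [tsum_nuttallTerm, integral_nuttallTerm _ ha hb] at hsum
  have h := hsum.mul_left (a ^ (-n))
  simp only [← mul_assoc, ← rpow_add ha, neg_add_cancel, rpow_zero, one_mul] at h
  exact h
end

section
/- For positive integers m, n and reals a > 0, b ≥ 0, the normalized Nuttall Q-function with m+n odd admits the exact double-sum representation 𝒬_{m,n}(a,b) = ∑_{l=0}^∞ ∑_{k=0}^{L} 2^{(m-n-1)/2} e^{-(a²+b²)/2} a^{2l} b^{2k} Γ((m+n+1)/2 + l) / (l! k! Γ(n+l+1) 2^{l+k}), where L = (m+n-1)/2 + l. -/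
open MeasureTheory Real Filter Topology

open MeasureTheory Real Filter

lemma hasDerivAt_G (N : ℕ) (x : ℝ) :
    HasDerivAt (fun y : ℝ => ∑ k ∈ Finset.range (N+1),
        Real.exp (-(y^2/2)) * (y^2/2)^k / (k.factorial : ℝ))
      (-(x * (Real.exp (-(x^2/2)) * (x^2/2)^N / (N.factorial : ℝ)))) x := by
  have hu : HasDerivAt (fun y : ℝ => -(y^2/2)) (-x) x := by
    have := ((hasDerivAt_pow 2 x).div_const 2).neg
    simpa using (show HasDerivAt (fun y : ℝ => -(y^2/2)) _ x from this)
  have hexp : HasDerivAt (fun y : ℝ => Real.exp (-(y^2/2)))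
      (Real.exp (-(x^2/2)) * (-x)) x := hu.exp
  induction N with
  | zero => simpa [mul_comm] using hexp
  | succ N ih =>
    have hpow : HasDerivAt (fun y : ℝ => (y^2/2)^(N+1))
        (((N:ℝ)+1) * (x^2/2)^N * x) x := by
      have h1 : HasDerivAt (fun y : ℝ => y^2/2) x x := by
        simpa using (hasDerivAt_pow 2 x).div_const 2
      have := h1.pow (N+1)
      simpa [mul_comm, mul_assoc] using (show HasDerivAt (fun y : ℝ => (y^2/2)^(N+1)) _ x from this)
    have hterm : HasDerivAt (fun y : ℝ =>
        Real.exp (-(y^2/2)) * (y^2/2)^(N+1) / ((N+1).factorial : ℝ))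
        ((Real.exp (-(x^2/2)) * (-x) * (x^2/2)^(N+1) +
          Real.exp (-(x^2/2)) * (((N:ℝ)+1) * (x^2/2)^N * x)) / ((N+1).factorial : ℝ)) x :=
      (hexp.mul hpow).div_const _
    have hsum := ih.add hterm
    have heq : (fun y : ℝ => ∑ k ∈ Finset.range (N+1+1),
        Real.exp (-(y^2/2)) * (y^2/2)^k / (k.factorial : ℝ)) =
        (fun y : ℝ => (∑ k ∈ Finset.range (N+1),
          Real.exp (-(y^2/2)) * (y^2/2)^k / (k.factorial : ℝ)) +
          Real.exp (-(y^2/2)) * (y^2/2)^(N+1) / ((N+1).factorial : ℝ)) := by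
      funext y; rw [Finset.sum_range_succ]
    rw [heq]
    refine hsum.congr_deriv ?_
    have hfac : ((N+1).factorial : ℝ) = ((N:ℝ)+1) * (N.factorial : ℝ) := by
      rw [Nat.factorial_succ]; push_cast; ring
    have hN : (N.factorial : ℝ) ≠ 0 := Nat.cast_ne_zero.mpr N.factorial_ne_zero
    have hN1 : ((N:ℝ)+1) ≠ 0 := by positivity
    rw [hfac]
    simp only [div_pow]
    field_simp [hfac]
    ring


lemma key_deriv (N : ℕ) (x : ℝ) :
    HasDerivAt (fun y : ℝ => -((2:ℝ)^N * (N.factorial : ℝ) * ∑ k ∈ Finset.range (N+1),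
        Real.exp (-(y^2/2)) * (y^2/2)^k / (k.factorial : ℝ)))
      (x^(2*N+1) * Real.exp (-(x^2/2))) x := by
  have h := ((hasDerivAt_G N x).const_mul ((2:ℝ)^N * (N.factorial : ℝ))).neg
  refine h.congr_deriv ?_
  have hN : (N.factorial : ℝ) ≠ 0 := Nat.cast_ne_zero.mpr N.factorial_ne_zero
  simp only [div_pow]
  field_simp
  ring

lemma key_tendsto (N : ℕ) :
    Tendsto (fun y : ℝ => -((2:ℝ)^N * (N.factorial : ℝ) * ∑ k ∈ Finset.range (N+1),
        Real.exp (-(y^2/2)) * (y^2/2)^k / (k.factorial : ℝ))) atTop (𝓝 0) := by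
  have hsq : Tendsto (fun y : ℝ => y^2/2) atTop atTop := by
    apply Tendsto.atTop_div_const (by norm_num)
    exact tendsto_pow_atTop (by norm_num)
  have hterm : ∀ k : ℕ, Tendsto (fun y : ℝ => Real.exp (-(y^2/2)) * (y^2/2)^k / (k.factorial : ℝ))
      atTop (𝓝 0) := by
    intro k
    have h0 : Tendsto (fun t : ℝ => t^k * Real.exp (-t)) atTop (𝓝 0) :=
      tendsto_pow_mul_exp_neg_atTop_nhds_zero k
    have := (h0.comp hsq).div_const (k.factorial : ℝ)
    simpa [Function.comp, mul_comm, zero_div] using this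
  have hsum : Tendsto (fun y : ℝ => ∑ k ∈ Finset.range (N+1),
      Real.exp (-(y^2/2)) * (y^2/2)^k / (k.factorial : ℝ)) atTop (𝓝 0) := by
    have := tendsto_finset_sum (Finset.range (N+1)) (fun k _ => hterm k)
    simpa using this
  simpa using (hsum.const_mul ((2:ℝ)^N * (N.factorial : ℝ))).neg

lemma key_int (N : ℕ) (b : ℝ) (hb : 0 ≤ b) :
    IntegrableOn (fun x : ℝ => x ^ (2*N+1) * Real.exp (-(x^2/2))) (Set.Ioi b) ∧
    (∫ x in Set.Ioi b, x ^ (2*N+1) * Real.exp (-(x^2/2))) =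
      (2:ℝ)^N * (N.factorial : ℝ) * Real.exp (-(b^2/2)) *
        ∑ k ∈ Finset.range (N+1), (b^2/2)^k / (k.factorial : ℝ) := by
  have hderiv : ∀ x ∈ Set.Ici b, HasDerivAt (fun y : ℝ => -((2:ℝ)^N * (N.factorial : ℝ) *
      ∑ k ∈ Finset.range (N+1), Real.exp (-(y^2/2)) * (y^2/2)^k / (k.factorial : ℝ)))
      (x^(2*N+1) * Real.exp (-(x^2/2))) x := fun x _ => key_deriv N x
  have hpos : ∀ x ∈ Set.Ioi b, 0 ≤ x^(2*N+1) * Real.exp (-(x^2/2)) := by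
    intro x hx
    have : (0:ℝ) ≤ x := le_trans hb (le_of_lt hx)
    positivity
  refine ⟨integrableOn_Ioi_deriv_of_nonneg' hderiv hpos (key_tendsto N), ?_⟩
  rw [integral_Ioi_of_hasDerivAt_of_nonneg' hderiv hpos (key_tendsto N), zero_sub, neg_neg]
  simp only [Finset.mul_sum]
  exact Finset.sum_congr rfl fun k _ => by ring


lemma summable_w (p n : ℕ) (c : ℝ) (hc : 0 < c) :
    Summable (fun l : ℕ => c^l * ((p+l).factorial : ℝ) /
      ((l.factorial : ℝ) * ((n+l).factorial : ℝ))) := by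
  set w : ℕ → ℝ := fun l => c^l * ((p+l).factorial : ℝ) /
      ((l.factorial : ℝ) * ((n+l).factorial : ℝ)) with hw
  have hwpos : ∀ l, 0 < w l := by
    intro l
    have h1 : (0:ℝ) < c^l := pow_pos hc l
    have h2 : (0:ℝ) < ((p+l).factorial : ℝ) := by exact_mod_cast (p+l).factorial_pos
    have h3 : (0:ℝ) < (l.factorial : ℝ) := by exact_mod_cast l.factorial_pos
    have h4 : (0:ℝ) < ((n+l).factorial : ℝ) := by exact_mod_cast (n+l).factorial_pos
    positivity
  have hratio : ∀ l : ℕ, ‖w (l+1)‖ / ‖w l‖ =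
      c * ((p:ℝ)+l+1) / (((l:ℝ)+1) * ((n:ℝ)+l+1)) := by
    intro l
    rw [Real.norm_eq_abs, Real.norm_eq_abs, abs_of_pos (hwpos _), abs_of_pos (hwpos _)]
    have e1 : (p+(l+1)).factorial = (p+l+1) * (p+l).factorial := by
      rw [show p+(l+1) = (p+l)+1 by omega, Nat.factorial_succ]
    have e2 : (l+1).factorial = (l+1) * l.factorial := Nat.factorial_succ l
    have e3 : (n+(l+1)).factorial = (n+l+1) * (n+l).factorial := by
      rw [show n+(l+1) = (n+l)+1 by omega, Nat.factorial_succ]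
    have h2 : (0:ℝ) < ((p+l).factorial : ℝ) := by exact_mod_cast (p+l).factorial_pos
    have h3 : (0:ℝ) < (l.factorial : ℝ) := by exact_mod_cast l.factorial_pos
    have h4 : (0:ℝ) < ((n+l).factorial : ℝ) := by exact_mod_cast (n+l).factorial_pos
    have hc' : c ≠ 0 := ne_of_gt hc
    simp only [hw, e1, e2, e3]
    push_cast
    rw [pow_succ]
    field_simp
  have hlim : Tendsto (fun l : ℕ => ‖w (l+1)‖ / ‖w l‖) atTop (𝓝 0) := by
    rw [show (fun l : ℕ => ‖w (l+1)‖ / ‖w l‖) =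
        (fun l : ℕ => c * ((p:ℝ)+l+1) / (((l:ℝ)+1) * ((n:ℝ)+l+1))) from funext hratio]
    have hdenom : Tendsto (fun l : ℕ => (n:ℝ)+l+1) atTop atTop := by
      apply tendsto_atTop_add_const_right
      exact tendsto_atTop_add_const_left _ _ tendsto_natCast_atTop_atTop
    have hg : Tendsto (fun l : ℕ => c * ((p:ℝ)+1) / ((n:ℝ)+l+1)) atTop (𝓝 0) :=
      Tendsto.div_atTop tendsto_const_nhds hdenom
    apply squeeze_zero (fun l => by positivity) _ hg
    intro l
    have h1 : (0:ℝ) < (l:ℝ)+1 := by positivity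
    have h2 : (0:ℝ) < (n:ℝ)+l+1 := by positivity
    rw [div_le_div_iff₀ (by positivity) h2]
    have key : ((p:ℝ)+l+1) ≤ ((p:ℝ)+1) * ((l:ℝ)+1) := by
      nlinarith [(Nat.cast_nonneg p : (0:ℝ) ≤ p), (Nat.cast_nonneg l : (0:ℝ) ≤ l)]
    have hcd : (0:ℝ) ≤ c * ((n:ℝ)+l+1) := by positivity
    nlinarith [mul_le_mul_of_nonneg_left key hcd]
  exact summable_of_ratio_test_tendsto_lt_one one_pos (Eventually.of_forall fun l => (hwpos l).ne')
    hlim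

theorem stmt15 (m n : ℕ) (hm : 1 ≤ m) (hn : 1 ≤ n) (hodd : Odd (m + n)) (a b : ℝ)
    (ha : 0 < a) (hb : 0 ≤ b) :
    nQ (m : ℝ) (n : ℝ) a b =
      ∑' l : ℕ, ∑ k ∈ Finset.range ((m + n - 1) / 2 + l + 1),
        (2 : ℝ) ^ (((m : ℝ) - (n : ℝ) - 1) / 2) * Real.exp (-(a ^ 2 + b ^ 2) / 2) *
          a ^ (2 * l) * b ^ (2 * k) * Real.Gamma (((m : ℝ) + (n : ℝ) + 1) / 2 + (l : ℝ)) /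
          ((l.factorial : ℝ) * (k.factorial : ℝ) * Real.Gamma ((n : ℝ) + (l : ℝ) + 1) *
            2 ^ (l + k)) := by
  obtain ⟨p, hp⟩ := hodd
  have hpR : (m:ℝ) + (n:ℝ) = 2*(p:ℝ)+1 := by exact_mod_cast congrArg (Nat.cast (R := ℝ)) hp
  have hΓ : ∀ l : ℕ, Real.Gamma ((n:ℝ)+(l:ℝ)+1) = ((n+l).factorial : ℝ) := by
    intro l
    rw [show (n:ℝ)+(l:ℝ)+1 = ((n+l:ℕ):ℝ)+1 by push_cast; ring, Real.Gamma_nat_eq_factorial]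
  have hfac : ∀ j : ℕ, (0:ℝ) < (j.factorial : ℝ) := fun j => by exact_mod_cast j.factorial_pos
  set D : ℕ → ℝ := fun l => Real.exp (-(a^2/2)) * (a/2)^(n+2*l) /
      ((l.factorial : ℝ) * Real.Gamma ((n:ℝ)+(l:ℝ)+1)) with hD
  set f : ℕ → ℝ → ℝ := fun l x => D l * (x^(2*(p+l)+1) * Real.exp (-(x^2/2))) with hf
  have hDpos : ∀ l, 0 < D l := by
    intro l
    have h1 := hfac l
    have h2 := hfac (n+l)
    have hDe : D l = Real.exp (-(a^2/2)) * (a/2)^(n+2*l) /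
        ((l.factorial : ℝ) * ((n+l).factorial : ℝ)) := by
      simp only [hD]; rw [hΓ l]
    rw [hDe]
    positivity
  -- pointwise expansion
  have hpt : ∀ x : ℝ, x ^ (m:ℝ) * Real.exp (-(x^2+a^2)/2) * besselI (n:ℝ) (a*x)
      = ∑' l, f l x := by
    intro x
    rw [besselI, ← tsum_mul_left]
    apply tsum_congr
    intro l
    rw [show (n:ℝ) + 2*(l:ℝ) = ((n+2*l : ℕ):ℝ) by push_cast; ring, Real.rpow_natCast,
      Real.rpow_natCast]
    simp only [hf, hD]
    rw [show a*x/2 = (a/2)*x by ring, mul_pow,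
      show 2*(p+l)+1 = m + (n+2*l) by omega, pow_add,
      show -(x^2+a^2)/2 = -(a^2/2) + -(x^2/2) by ring, Real.exp_add]
    have h1 := (hfac l).ne'
    have h2 := (hΓ l ▸ (hfac (n+l)).ne' : Real.Gamma ((n:ℝ)+(l:ℝ)+1) ≠ 0)
    field_simp
    ring
  have hmeas : ∀ l : ℕ, AEStronglyMeasurable (f l) (volume.restrict (Set.Ioi b)) := by
    intro l
    apply Continuous.aestronglyMeasurable
    fun_prop
  have hInt : ∀ l : ℕ, IntegrableOn (f l) (Set.Ioi b) := by
    intro l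
    exact (key_int (p+l) b hb).1.const_mul (D l)
  have hIval : ∀ l : ℕ, (∫ x in Set.Ioi b, f l x) =
      D l * ((2:ℝ)^(p+l) * ((p+l).factorial : ℝ) * Real.exp (-(b^2/2)) *
        ∑ k ∈ Finset.range (p+l+1), (b^2/2)^k / (k.factorial : ℝ)) := by
    intro l
    simp only [hf]
    rw [MeasureTheory.integral_const_mul, (key_int (p+l) b hb).2]
  have hfnn : ∀ l : ℕ, 0 ≤ᵐ[volume.restrict (Set.Ioi b)] f l := by
    intro l
    refine (ae_restrict_iff' measurableSet_Ioi).2 (ae_of_all _ fun x hx => ?_)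
    have hx0 : (0:ℝ) ≤ x := le_trans hb (le_of_lt hx)
    have := (hDpos l).le
    positivity
  have hlin : ∀ l : ℕ, (∫⁻ x in Set.Ioi b, ‖f l x‖₊) = ENNReal.ofReal (∫ x in Set.Ioi b, f l x) := by
    intro l
    rw [ofReal_integral_eq_lintegral_ofReal (hInt l) (hfnn l)]
    exact lintegral_congr_ae ((hfnn l).mono fun x hx => by dsimp only; exact Real.enorm_eq_ofReal hx)
  set J : ℕ → ℝ := fun l => D l * ((2:ℝ)^(p+l) * ((p+l).factorial : ℝ)) with hJ
  have hbound : ∀ l : ℕ, (∫ x in Set.Ioi b, f l x) ≤ J l := by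
    intro l
    have hT : Real.exp (-(b^2/2)) * ∑ k ∈ Finset.range (p+l+1), (b^2/2)^k / (k.factorial : ℝ) ≤ 1 := by
      calc Real.exp (-(b^2/2)) * ∑ k ∈ Finset.range (p+l+1), (b^2/2)^k / (k.factorial : ℝ)
          ≤ Real.exp (-(b^2/2)) * Real.exp (b^2/2) := by
            apply mul_le_mul_of_nonneg_left _ (Real.exp_nonneg _)
            exact Real.sum_le_exp_of_nonneg (by positivity) _
        _ = 1 := by rw [← Real.exp_add]; simp
    have h1 : (0:ℝ) ≤ D l * ((2:ℝ)^(p+l) * ((p+l).factorial : ℝ)) := by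
      have := (hDpos l).le
      have := (hfac (p+l)).le
      positivity
    calc (∫ x in Set.Ioi b, f l x)
        = (D l * ((2:ℝ)^(p+l) * ((p+l).factorial : ℝ))) *
          (Real.exp (-(b^2/2)) * ∑ k ∈ Finset.range (p+l+1), (b^2/2)^k / (k.factorial : ℝ)) := by
          rw [hIval l]; ring
      _ ≤ (D l * ((2:ℝ)^(p+l) * ((p+l).factorial : ℝ))) * 1 := mul_le_mul_of_nonneg_left hT h1
      _ = J l := by rw [mul_one]
  have hJnn : ∀ l, 0 ≤ J l := by
    intro l
    have := (hDpos l).le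
    have := (hfac (p+l)).le
    rw [hJ]
    positivity
  have hsumJ : Summable J := by
    have hrw : J = fun l : ℕ => (Real.exp (-(a^2/2)) * (a/2)^n * 2^p) *
        ((a^2/2)^l * ((p+l).factorial : ℝ) / ((l.factorial : ℝ) * ((n+l).factorial : ℝ))) := by
      funext l
      simp only [hJ, hD]
      rw [hΓ l, show ((a:ℝ)^2/2)^l = (a/2)^(2*l) * 2^l by
        rw [pow_mul, show (a:ℝ)^2/2 = (a/2)^2*2 by ring, mul_pow]]
      have h1 := (hfac l).ne'
      have h2 := (hfac (n+l)).ne'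
      field_simp
      ring
    rw [hrw]
    exact (summable_w p n _ (by positivity)).mul_left _
  have hne_top : (∑' l : ℕ, ∫⁻ x in Set.Ioi b, ‖f l x‖₊) ≠ ⊤ := by
    have : (∑' l : ℕ, ∫⁻ x in Set.Ioi b, ‖f l x‖₊) ≤ ENNReal.ofReal (∑' l, J l) := by
      rw [ENNReal.ofReal_tsum_of_nonneg hJnn hsumJ]
      exact ENNReal.tsum_le_tsum fun l => by
        rw [hlin l]; exact ENNReal.ofReal_le_ofReal (hbound l)
    exact ne_top_of_le_ne_top ENNReal.ofReal_ne_top this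
  have h0 : nuttallQ (m:ℝ) (n:ℝ) a b = ∑' l, ∫ x in Set.Ioi b, f l x := by
    rw [nuttallQ]
    rw [MeasureTheory.integral_congr_ae (ae_of_all _ hpt)]
    exact MeasureTheory.integral_tsum hmeas hne_top
  rw [nQ, h0, ← tsum_mul_left]
  apply tsum_congr
  intro l
  rw [hIval l, show (m+n-1)/2 = p from by omega]
  -- rpow simplifications
  have ha' : a ^ (-(n:ℝ)) = ((a:ℝ)^(n:ℕ))⁻¹ := by
    rw [Real.rpow_neg ha.le, Real.rpow_natCast]
  have hr2 : (2:ℝ) ^ (((m:ℝ)-(n:ℝ)-1)/2) = (2:ℝ)^(p:ℕ) / (2:ℝ)^(n:ℕ) := by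
    rw [show ((m:ℝ)-(n:ℝ)-1)/2 = (p:ℝ) - (n:ℝ) by linarith [hpR],
      Real.rpow_sub (by norm_num), Real.rpow_natCast, Real.rpow_natCast]
  have hΓ2 : Real.Gamma (((m:ℝ)+(n:ℝ)+1)/2 + (l:ℝ)) = ((p+l).factorial : ℝ) := by
    rw [show ((m:ℝ)+(n:ℝ)+1)/2 + (l:ℝ) = ((p+l:ℕ):ℝ)+1 by push_cast; linarith [hpR],
      Real.Gamma_nat_eq_factorial]
  simp only [Finset.mul_sum]
  apply Finset.sum_congr rfl
  intro k _
  simp only [hD]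
  rw [ha', hr2, hΓ2, hΓ l,
    show -(a^2+b^2)/2 = -(a^2/2) + -(b^2/2) by ring, Real.exp_add]
  have h1 := (hfac l).ne'
  have h2 := (hfac (n+l)).ne'
  have h3 := (hfac k).ne'
  have h4 := (hfac (p+l)).ne'
  have ha0 : a ≠ 0 := ha.ne'
  simp only [div_pow]
  field_simp
  ring
end

section
/- For integers m ≥ 2, n ≥ 0 and reals a > 0, b > 0, the Nuttall Q-function satisfies the recursion Q_{m,n}(a,b) = b^{m-1} I_n(ab) e^{-(a²+b²)/2} + a Q_{m-1,n+1}(a,b) + (m+n-1) Q_{m-2,n}(a,b). -/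
open MeasureTheory Real Filter

/-! Expanding `I_n(ax)` in its power series and integrating term by term writes
`Q_{m,n}(a,b) = e^{-a²/2} ∑_l c_{n,l}(a) J_{m+n+2l}(b)`, where `c_{n,l}(a) = (a/2)^{n+2l}/(l!(n+l)!)`
and `J_k(b) = ∫_b^∞ x^k e^{-x²/2} dx`. Integration by parts gives
`J_{k+2} = b^{k+1} e^{-b²/2} + (k+1) J_k`. Applied to every term with `k = m+n-2+2l`, the boundary
terms resum to `b^{m-1} I_n(ab) e^{-(a²+b²)/2}`, the factor `m+n-1` gives `(m+n-1) Q_{m-2,n}`, and the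
remaining `2l c_{n,l}(a) = a c_{n+1,l-1}(a)` turns, after shifting `l`, into `a Q_{m-1,n+1}`.
Term-by-term integration is legitimate because `J_{k+2}(0) = (k+1) J_k(0)` makes `J_{k+2l}(b)` grow
no faster than a constant times `4^l l!`, against the `1/(l!(n+l)!)` decay of `c_{n,l}`. -/

open Topology
open scoped Nat

noncomputable def besselTerm (n l : ℕ) (y : ℝ) : ℝ :=
  (y / 2) ^ (n + 2 * l) / (l ! * (n + l)!)

lemma besselTerm_mul (n l : ℕ) (y x : ℝ) :
    besselTerm n l (y * x) = besselTerm n l y * x ^ (n + 2 * l) := by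
  rw [besselTerm, besselTerm, mul_div_right_comm, mul_pow, mul_div_right_comm]

lemma two_mul_succ_mul_besselTerm_succ (n l : ℕ) (y : ℝ) :
    2 * (l + 1) * besselTerm n (l + 1) y = y * besselTerm (n + 1) l y := by
  rw [besselTerm, besselTerm, show n + 2 * (l + 1) = n + 1 + 2 * l + 1 by ring,
    show n + (l + 1) = n + 1 + l by ring, Nat.factorial_succ, pow_succ]
  push_cast
  field_simp

lemma summable_besselTerm (n : ℕ) (y : ℝ) : Summable (besselTerm n · y) := by
  refine .of_norm_bounded ((Real.summable_pow_div_factorial ((y / 2) ^ 2)).mul_left (|y / 2| ^ n))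
    fun l => ?_
  rw [besselTerm, norm_div, norm_pow, Real.norm_eq_abs, Real.norm_of_nonneg (by positivity),
    pow_add, pow_mul, sq_abs, mul_div_assoc]
  gcongr
  exact le_mul_of_one_le_right (by positivity) (mod_cast (n + l).factorial_pos)

lemma hasSum_besselI (n : ℕ) (y : ℝ) : HasSum (besselTerm n · y) (besselI n y) := by
  convert (summable_besselTerm n y).hasSum using 1
  refine tsum_congr fun l => ?_
  rw [besselTerm, show (n : ℝ) + 2 * l = (n + 2 * l : ℕ) by push_cast; ring, Real.rpow_natCast,
    show (n : ℝ) + l + 1 = (n + l : ℕ) + 1 by push_cast; ring, Real.Gamma_nat_eq_factorial]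

noncomputable def gaussTailMoment (b : ℝ) (k : ℕ) : ℝ :=
  ∫ x in Set.Ioi b, x ^ k * exp (-x ^ 2 / 2)

lemma integrable_pow_mul_exp_neg_sq_div_two (k : ℕ) :
    Integrable fun x : ℝ => x ^ k * exp (-x ^ 2 / 2) := by
  refine (integrable_rpow_mul_exp_neg_mul_sq (b := 1 / 2) (by norm_num)
    (s := k) (by linarith [k.cast_nonneg (α := ℝ)])).congr (.of_forall fun x => ?_)
  dsimp only
  rw [Real.rpow_natCast]
  ring_nf

lemma tendsto_pow_mul_exp_neg_sq_div_two (k : ℕ) :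
    Tendsto (fun x : ℝ => x ^ k * exp (-x ^ 2 / 2)) atTop (𝓝 0) := by
  have h := (rpow_mul_exp_neg_mul_sq_isLittleO_exp_neg (b := 1 / 2) (by norm_num) k).isBigO
  refine (h.trans_tendsto (tendsto_exp_atBot.comp
    (tendsto_id.const_mul_atTop_of_neg (by norm_num)))).congr fun x => ?_
  rw [Real.rpow_natCast]
  ring_nf

lemma gaussTailMoment_add_two (b : ℝ) (k : ℕ) :
    gaussTailMoment b (k + 2) = b ^ (k + 1) * exp (-b ^ 2 / 2) + (k + 1) * gaussTailMoment b k := by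
  have hderiv : ∀ x ∈ Set.Ici b, HasDerivAt (fun x => -(x ^ (k + 1) * exp (-x ^ 2 / 2)))
      (x ^ (k + 2) * exp (-x ^ 2 / 2) - (k + 1) * (x ^ k * exp (-x ^ 2 / 2))) x := by
    intro x _
    have hpow : HasDerivAt (fun x : ℝ => x ^ (k + 1)) ((k + 1) * x ^ k) x := by
      simpa using hasDerivAt_pow (k + 1) x
    have hgauss : HasDerivAt (fun x : ℝ => -x ^ 2 / 2) (-x) x := by
      simpa using ((hasDerivAt_pow 2 x).neg.div_const 2).congr_deriv (by ring)
    exact (hpow.mul hgauss.exp).neg.congr_deriv (by ring)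
  have hint := integrable_pow_mul_exp_neg_sq_div_two
  have hftc := integral_Ioi_of_hasDerivAt_of_tendsto' hderiv
    ((hint (k + 2)).sub ((hint k).const_mul _)).integrableOn
    (by simpa using (tendsto_pow_mul_exp_neg_sq_div_two (k + 1)).neg)
  rw [integral_sub (hint (k + 2)).integrableOn ((hint k).const_mul _).integrableOn,
    integral_const_mul] at hftc
  rw [gaussTailMoment, gaussTailMoment]
  linarith

lemma gaussTailMoment_nonneg {b : ℝ} (hb : 0 ≤ b) (k : ℕ) : 0 ≤ gaussTailMoment b k :=
  setIntegral_nonneg measurableSet_Ioi fun x hx => by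
    have : 0 ≤ x := hb.trans hx.le
    positivity

lemma gaussTailMoment_le_gaussTailMoment_zero {b : ℝ} (hb : 0 ≤ b) (k : ℕ) :
    gaussTailMoment b k ≤ gaussTailMoment 0 k :=
  setIntegral_mono_set (integrable_pow_mul_exp_neg_sq_div_two k).integrableOn
    ((ae_restrict_mem measurableSet_Ioi).mono fun x (hx : 0 < x) => by positivity)
    (Set.Ioi_subset_Ioi hb).eventuallyLE

lemma factorial_mul_gaussTailMoment_zero_le (K l : ℕ) :
    K ! * gaussTailMoment 0 (K + 2 * l) ≤ 2 ^ l * (K + l)! * gaussTailMoment 0 K := by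
  induction l with
  | zero => simp
  | succ l ih =>
    have hrec := gaussTailMoment_add_two 0 (K + 2 * l)
    rw [zero_pow (Nat.succ_ne_zero _), zero_mul, zero_add] at hrec
    rw [show K + 2 * (l + 1) = K + 2 * l + 2 by ring, hrec, show K + (l + 1) = K + l + 1 by ring,
      Nat.factorial_succ]
    have h0 := gaussTailMoment_nonneg le_rfl (K + 2 * l)
    push_cast
    calc (K ! : ℝ) * ((K + 2 * l + 1) * gaussTailMoment 0 (K + 2 * l))
        = (K + 2 * l + 1) * (K ! * gaussTailMoment 0 (K + 2 * l)) := by ring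
      _ ≤ (2 * (K + l + 1)) * (2 ^ l * (K + l)! * gaussTailMoment 0 K) := by
        gcongr
        linarith
      _ = _ := by ring

lemma add_factorial_le_two_pow_mul (K l : ℕ) : (K + l)! ≤ 2 ^ (K + l) * K ! * l ! := by
  rw [← Nat.add_choose_mul_factorial_mul_factorial, mul_assoc, mul_assoc]
  exact Nat.mul_le_mul_right _ (Nat.choose_le_two_pow _ _)

lemma gaussTailMoment_le {b : ℝ} (hb : 0 ≤ b) (K l : ℕ) :
    gaussTailMoment b (K + 2 * l) ≤ 2 ^ K * 4 ^ l * l ! * gaussTailMoment 0 K := by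
  have hK : (0 : ℝ) < K ! := mod_cast K.factorial_pos
  have hfac : ((K + l)! : ℝ) ≤ 2 ^ (K + l) * K ! * l ! := mod_cast add_factorial_le_two_pow_mul K l
  refine (gaussTailMoment_le_gaussTailMoment_zero hb _).trans (le_of_mul_le_mul_left ?_ hK)
  calc (K ! : ℝ) * gaussTailMoment 0 (K + 2 * l) ≤ 2 ^ l * (K + l)! * gaussTailMoment 0 K :=
        factorial_mul_gaussTailMoment_zero_le K l
    _ ≤ 2 ^ l * (2 ^ (K + l) * K ! * l !) * gaussTailMoment 0 K := by
        have := gaussTailMoment_nonneg le_rfl K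
        gcongr
    _ = K ! * (2 ^ K * 4 ^ l * l ! * gaussTailMoment 0 K) := by
        rw [show (4 : ℝ) = 2 ^ 2 by norm_num, ← pow_mul, pow_add]
        ring

lemma summable_besselTerm_mul_gaussTailMoment {a b : ℝ} (ha : 0 ≤ a) (hb : 0 ≤ b) (N K : ℕ) :
    Summable fun l => besselTerm N l a * gaussTailMoment b (K + 2 * l) := by
  set C := (a / 2) ^ N * 2 ^ K * gaussTailMoment 0 K
  refine .of_nonneg_of_le (fun l => ?_) (fun l => ?_)
    ((Real.summable_pow_div_factorial (a ^ 2)).mul_left C)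
  · have := gaussTailMoment_nonneg hb (K + 2 * l)
    rw [besselTerm]
    positivity
  · have hJ := gaussTailMoment_le hb K l
    have hC : 0 ≤ C := by
      have := gaussTailMoment_nonneg le_rfl K
      positivity
    calc besselTerm N l a * gaussTailMoment b (K + 2 * l)
        ≤ besselTerm N l a * (2 ^ K * 4 ^ l * l ! * gaussTailMoment 0 K) := by
          rw [besselTerm]
          gcongr
      _ = C * ((a ^ 2) ^ l / (N + l)!) := by
          have h4 : (4 : ℝ) ^ l * ((a / 2) ^ 2) ^ l = (a ^ 2) ^ l := by rw [← mul_pow]; ring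
          simp only [besselTerm, C]
          rw [pow_add, pow_mul, ← h4]
          field_simp
      _ ≤ C * ((a ^ 2) ^ l / l !) := by
          gcongr
          omega

lemma hasSum_nuttallQ {a b : ℝ} (ha : 0 ≤ a) (hb : 0 ≤ b) (M N : ℕ) :
    HasSum (fun l => exp (-a ^ 2 / 2) * besselTerm N l a * gaussTailMoment b (M + N + 2 * l))
      (nuttallQ M N a b) := by
  set F : ℕ → ℝ → ℝ := fun l x =>
    exp (-a ^ 2 / 2) * besselTerm N l a * (x ^ (M + N + 2 * l) * exp (-x ^ 2 / 2))
  have hF_int : ∀ l, Integrable (F l) (volume.restrict (Set.Ioi b)) := fun l =>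
    ((integrable_pow_mul_exp_neg_sq_div_two _).const_mul _).integrableOn
  have hF_eq : ∀ l, ∫ x in Set.Ioi b, F l x =
      exp (-a ^ 2 / 2) * besselTerm N l a * gaussTailMoment b (M + N + 2 * l) := fun l =>
    integral_const_mul _ _
  have hF_norm : ∀ l, ∫ x in Set.Ioi b, ‖F l x‖ = ∫ x in Set.Ioi b, F l x := fun l =>
    setIntegral_congr_fun measurableSet_Ioi fun x (hx : b < x) => by
      have : 0 ≤ x := hb.trans hx.le
      have : 0 ≤ besselTerm N l a := by rw [besselTerm]; positivity
      exact Real.norm_of_nonneg (by positivity)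
  have hF_sum : ∀ x, ∑' l, F l x = x ^ (M : ℝ) * exp (-(x ^ 2 + a ^ 2) / 2) * besselI N (a * x) := by
    intro x
    rw [← ((hasSum_besselI N (a * x)).mul_left _).tsum_eq, Real.rpow_natCast]
    refine tsum_congr fun l => ?_
    simp only [F]
    rw [besselTerm_mul, show -(x ^ 2 + a ^ 2) / 2 = -a ^ 2 / 2 + -x ^ 2 / 2 by ring, exp_add,
      show M + N + 2 * l = M + (N + 2 * l) by ring, pow_add]
    ring
  have h := hasSum_integral_of_summable_integral_norm hF_int
    ((summable_besselTerm_mul_gaussTailMoment ha hb N (M + N)).mul_left (exp (-a ^ 2 / 2))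
      |>.congr fun l => by rw [hF_norm, hF_eq, mul_assoc])
  simp only [hF_eq, hF_sum] at h
  exact h

lemma hasSum_pow_mul_besselI_mul_exp (a b : ℝ) (M N : ℕ) :
    HasSum (fun l => exp (-a ^ 2 / 2) * besselTerm N l a *
        (b ^ (M + N + 1 + 2 * l) * exp (-b ^ 2 / 2)))
      (b ^ (M + 1) * besselI N (a * b) * exp (-(a ^ 2 + b ^ 2) / 2)) := by
  refine (((hasSum_besselI N (a * b)).mul_left (b ^ (M + 1))).mul_right
    (exp (-(a ^ 2 + b ^ 2) / 2))).congr_fun fun l => ?_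
  rw [besselTerm_mul, show -(a ^ 2 + b ^ 2) / 2 = -a ^ 2 / 2 + -b ^ 2 / 2 by ring, exp_add,
    show M + N + 1 + 2 * l = M + 1 + (N + 2 * l) by ring, pow_add]
  ring

theorem nuttallQ_add_two {a b : ℝ} (ha : 0 ≤ a) (hb : 0 ≤ b) (M N : ℕ) :
    nuttallQ (M + 2 : ℕ) N a b =
      b ^ (M + 1) * besselI N (a * b) * exp (-(a ^ 2 + b ^ 2) / 2) +
        a * nuttallQ (M + 1 : ℕ) (N + 1 : ℕ) a b + (M + N + 1) * nuttallQ M N a b := by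
  set t : ℕ → ℝ := fun l => exp (-a ^ 2 / 2) * besselTerm N l a
  have hQ1 := hasSum_nuttallQ ha hb (M + 1) (N + 1)
  have hQ0 := hasSum_nuttallQ ha hb M N
  have hshift : HasSum (fun l => 2 * l * (t l * gaussTailMoment b (M + N + 2 * l)))
      (a * nuttallQ (M + 1 : ℕ) (N + 1 : ℕ) a b) := by
    refine (hasSum_nat_add_iff' 1).mp ?_
    simp only [Finset.range_one, Finset.sum_singleton, CharP.cast_eq_zero, mul_zero, zero_mul,
      sub_zero]
    refine (hQ1.mul_left a).congr_fun fun l => ?_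
    rw [show M + 1 + (N + 1) + 2 * l = M + N + 2 * (l + 1) by ring]
    simp only [t]
    push_cast
    linear_combination (exp (-a ^ 2 / 2) * gaussTailMoment b (M + N + 2 * (l + 1))) *
      two_mul_succ_mul_besselTerm_succ N l a
  refine (hasSum_nuttallQ ha hb (M + 2) N).unique
    ((((hasSum_pow_mul_besselI_mul_exp a b M N).add hshift).add
      (hQ0.mul_left (M + N + 1 : ℝ))).congr_fun fun l => ?_)
  rw [show M + 2 + N + 2 * l = M + N + 2 * l + 2 by ring, gaussTailMoment_add_two]
  push_cast
  ring

theorem stmt17 (m n : ℕ) (hm : 2 ≤ m) (a b : ℝ) (ha : 0 < a) (hb : 0 < b) :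
    nuttallQ (m : ℝ) (n : ℝ) a b =
      b ^ ((m : ℝ) - 1) * besselI (n : ℝ) (a * b) * Real.exp (-(a ^ 2 + b ^ 2) / 2) +
        a * nuttallQ ((m : ℝ) - 1) ((n : ℝ) + 1) a b +
        ((m : ℝ) + (n : ℝ) - 1) * nuttallQ ((m : ℝ) - 2) (n : ℝ) a b := by
  obtain ⟨M, rfl⟩ := Nat.exists_eq_add_of_le' hm
  rw [show ((M + 2 : ℕ) : ℝ) - 1 = (M + 1 : ℕ) by push_cast; ring,
    show ((M + 2 : ℕ) : ℝ) - 2 = M by push_cast; ring,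
    show ((M + 2 : ℕ) : ℝ) + n - 1 = M + n + 1 by push_cast; ring,
    Real.rpow_natCast, ← Nat.cast_succ]
  exact nuttallQ_add_two ha.le hb.le M n
end
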